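/- Minimax loss in the multi-unit uniform-price auction is no greater than minimax loss in the multi-unit pay-as-bid auction: min over bid vectors b of L^LAB(b) ≤ min over bid vectors b of L^PAB(b). Moreover, if M ≥ 2 and v_M > 0 then the inequality is strict. -/

import Mathlib

noncomputable section

/-- Positive part `(x)₊ = max(x,0)`. -/
def pos (x : ℝ) : ℝ := max x 0

/-- A bid vector for `M` units: weakly decreasing on `{1,…,M}` and nonnegative at `M`. -/
def IsBid (M : ℕ) (b : ℕ → ℝ) : Prop :=
  (∀ k, 1 ≤ k → k < M → b (k + 1) ≤ b k) ∧ 0 ≤ b M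

/-- A value vector for `M` units: weakly decreasing on `{1,…,M}` and nonnegative at `M`. -/
def IsVal (M : ℕ) (v : ℕ → ℝ) : Prop :=
  (∀ k, 1 ≤ k → k < M → v (k + 1) ≤ v k) ∧ 0 ≤ v M

/-- Extension of the bid vector by the convention `b_{M+1} = 0`. -/
def bext (M : ℕ) (b : ℕ → ℝ) (k : ℕ) : ℝ := if k ≤ M then b k else 0

/-- Conditional regret at quantity `k ∈ {0,…,M}` in the multi-unit pay-as-bid auction:
`R_k(b) = Σ_{j=1}^k (b_j − b_{k+1}) + Σ_{j=k+1}^M (v_j − b_{k+1})₊`. -/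
def Rpab (M : ℕ) (v b : ℕ → ℝ) (k : ℕ) : ℝ :=
  (∑ j ∈ Finset.Icc 1 k, (b j - bext M b (k + 1)))
    + ∑ j ∈ Finset.Icc (k + 1) M, pos (v j - bext M b (k + 1))

/-- Maximum loss in the multi-unit pay-as-bid auction: `L^PAB(b) = max_{0 ≤ k ≤ M} R_k(b)`. -/
def Lpab (M : ℕ) (v b : ℕ → ℝ) : ℝ :=
  (Finset.Icc 0 M).sup' (Finset.nonempty_Icc.mpr (Nat.zero_le M)) (Rpab M v b)

/-- A minimax-loss bid in the multi-unit pay-as-bid auction. -/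
def IsMinimaxPAB (M : ℕ) (v b : ℕ → ℝ) : Prop :=
  IsBid M b ∧ ∀ b', IsBid M b' → Lpab M v b ≤ Lpab M v b'
/-- Overbidding regret at quantity `k ∈ {1,…,M}` in the multi-unit uniform-price auction:
`O_k(b) = k·b_k`. -/
def Olab (b : ℕ → ℝ) (k : ℕ) : ℝ := (k : ℝ) * b k

/-- Underbidding regret at quantity `k − 1` in the multi-unit uniform-price auction:
`U_{k−1}(b) = Σ_{j=k}^M (v_j − b_k)₊`. -/
def Ulab (M : ℕ) (v b : ℕ → ℝ) (k : ℕ) : ℝ :=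
  ∑ j ∈ Finset.Icc k M, pos (v j - b k)

/-- Maximum loss in the multi-unit uniform-price auction:
`L^LAB(b) = max_{1 ≤ k ≤ M} max(O_k(b), U_{k−1}(b))`. -/
def Llab (M : ℕ) (hM : 1 ≤ M) (v b : ℕ → ℝ) : ℝ :=
  (Finset.Icc 1 M).sup' (Finset.nonempty_Icc.mpr hM)
    (fun k => max (Olab b k) (Ulab M v b k))

/-- A cross-conditional regret minimizing bid: `k·b_k = Σ_{j=k}^M (v_j − b_k)₊` for all
`k ∈ {1,…,M}`. -/
def IsCrossCond (M : ℕ) (v b : ℕ → ℝ) : Prop :=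
  ∀ k ∈ Finset.Icc 1 M, (k : ℝ) * b k = ∑ j ∈ Finset.Icc k M, pos (v j - b k)

/-- A minimax-loss bid in the multi-unit uniform-price auction. -/
def IsMinimaxLAB (M : ℕ) (hM : 1 ≤ M) (v b : ℕ → ℝ) : Prop :=
  IsBid M b ∧ ∀ b', IsBid M b' → Llab M hM v b ≤ Llab M hM v b'

/-!
Every uniform-price regret is dominated by a pay-as-bid regret of the same bid:
`k b_k ≤ Σ_j b_j = R_M` and `U_{k-1}(b) ≤ R_{k-1}(b)`, so `L^LAB ≤ L^PAB` pointwise.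
For the strict inequality take a pay-as-bid minimizer `b` (it exists by compactness).
When `M ≥ 2` and `v_M > 0`, the only uniform-price regrets of `b` that can reach `L^PAB(b)`
are `U_0 = Σ_j (v_j - b_1)₊` and `O_M = M b_M`; raising `b_1` and lowering `b_M` slightly
pushes both strictly below it without lifting any other regret to that level.
-/

open Finset Filter Topology

lemma pos_nonneg (x : ℝ) : 0 ≤ pos x := le_max_right _ _

lemma le_pos (x : ℝ) : x ≤ pos x := le_max_left _ _

lemma pos_mono {x y : ℝ} (h : x ≤ y) : pos x ≤ pos y := max_le_max h le_rfl

lemma pos_eq_self {x : ℝ} (h : 0 ≤ x) : pos x = x := max_eq_left h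

lemma pos_eq_zero {x : ℝ} (h : x ≤ 0) : pos x = 0 := max_eq_right h

lemma pos_add_le (x : ℝ) {y : ℝ} (hy : 0 ≤ y) : pos (x + y) ≤ pos x + y :=
  max_le (by linarith [le_pos x]) (by linarith [pos_nonneg x])

lemma sum_pos_sub_lt {ι : Type*} (s : Finset ι) (f : ι → ℝ) {c c' L : ℝ} (hc : c < c')
    (hL : 0 < L) (h : ∑ i ∈ s, pos (f i - c) ≤ L) : ∑ i ∈ s, pos (f i - c') < L := by
  by_cases hpos : ∃ i ∈ s, c < f i
  · refine lt_of_lt_of_le (sum_lt_sum (fun i _ => pos_mono (by linarith)) ?_) h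
    obtain ⟨i, hi, hci⟩ := hpos
    exact ⟨i, hi, max_lt (by linarith [le_pos (f i - c)]) (by linarith [le_pos (f i - c)])⟩
  · push Not at hpos
    rwa [sum_eq_zero fun i hi => pos_eq_zero (by linarith [hpos i hi])]

section Bids

variable {M : ℕ} {v b : ℕ → ℝ} {j k : ℕ}

lemma IsBid.anti (hb : IsBid M b) (hj : 1 ≤ j) (hjk : j ≤ k) (hkM : k ≤ M) : b k ≤ b j := by
  induction k, hjk using Nat.le_induction with
  | base => exact le_rfl
  | succ k hjk ih => exact (hb.1 k (hj.trans hjk) hkM).trans (ih (by omega))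

lemma IsBid.nonneg (hb : IsBid M b) (hj : j ∈ Icc 1 M) : 0 ≤ b j :=
  hb.2.trans (hb.anti (mem_Icc.1 hj).1 (mem_Icc.1 hj).2 le_rfl)

lemma isBid_zero (M : ℕ) : IsBid M 0 := ⟨fun _ _ _ => le_rfl, le_rfl⟩

lemma isClosed_setOf_isBid (M : ℕ) : IsClosed {b : ℕ → ℝ | IsBid M b} := by
  simp only [IsBid, Set.ofPred_and, Set.ofPred_forall]
  refine .inter (isClosed_iInter fun k => isClosed_iInter fun _ => isClosed_iInter fun _ => ?_) ?_
  · exact isClosed_le (continuous_apply _) (continuous_apply _)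
  · exact isClosed_le continuous_const (continuous_apply M)

lemma IsBid.indicator (hb : IsBid M b) : IsBid M ((Set.Icc 1 M).indicator b) := by
  refine ⟨fun k hk hkM => ?_, Set.indicator_nonneg (fun _ hj => hb.nonneg (mem_Icc.2 hj)) M⟩
  rw [Set.indicator_of_mem (show k + 1 ∈ Set.Icc 1 M from ⟨by omega, hkM⟩),
    Set.indicator_of_mem (show k ∈ Set.Icc 1 M from ⟨hk, hkM.le⟩)]
  exact hb.1 k hk hkM

lemma mul_le_sum_Icc (hb : IsBid M b) (hkM : k ≤ M) :
    (k : ℝ) * b k ≤ ∑ j ∈ Icc 1 k, b j := by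
  simpa using card_nsmul_le_sum (Icc 1 k) b (b k)
    fun j hj => hb.anti (mem_Icc.1 hj).1 (mem_Icc.1 hj).2 hkM

end Bids

section Regret

variable {M : ℕ} {v b : ℕ → ℝ} {k : ℕ}

lemma Rpab_le_Lpab (hk : k ≤ M) : Rpab M v b k ≤ Lpab M v b :=
  le_sup' _ (mem_Icc.2 ⟨k.zero_le, hk⟩)

lemma Rpab_self : Rpab M v b M = ∑ j ∈ Icc 1 M, b j := by
  simp [Rpab, bext]

lemma sum_Icc_le_Lpab : ∑ j ∈ Icc 1 M, b j ≤ Lpab M v b :=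
  Rpab_self (v := v) ▸ Rpab_le_Lpab le_rfl

lemma Ulab_self : Ulab M v b M = pos (v M - b M) := by
  simp [Ulab]
lemma Rpab_eq_sum_add_Ulab (hk : k + 1 ≤ M) :
    Rpab M v b k = ∑ j ∈ Icc 1 (k + 1), (b j - b (k + 1)) + Ulab M v b (k + 1) := by
  rw [sum_Icc_succ_top (by omega), sub_self, add_zero]
  simp [Rpab, Ulab, bext, hk]

lemma Olab_le_Lpab (hb : IsBid M b) (hkM : k ≤ M) : Olab b k ≤ Lpab M v b :=
  calc Olab b k ≤ ∑ j ∈ Icc 1 k, b j := mul_le_sum_Icc hb hkM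
    _ ≤ ∑ j ∈ Icc 1 M, b j :=
      sum_le_sum_of_subset_of_nonneg (Icc_subset_Icc_right hkM)
        fun _ hj _ => hb.nonneg hj
    _ ≤ Lpab M v b := sum_Icc_le_Lpab

lemma Ulab_add_sub_le_Lpab (hb : IsBid M b) (hk : 1 ≤ k) (hkM : k ≤ M) :
    Ulab M v b k + (b 1 - b k) ≤ Lpab M v b := by
  obtain ⟨m, rfl⟩ : ∃ m, k = m + 1 := ⟨k - 1, by omega⟩
  have hdiscount : b 1 - b (m + 1) ≤ ∑ j ∈ Icc 1 (m + 1), (b j - b (m + 1)) :=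
    single_le_sum (f := fun j => b j - b (m + 1))
      (fun j hj => sub_nonneg.2 (hb.anti (mem_Icc.1 hj).1 (mem_Icc.1 hj).2 hkM))
      (mem_Icc.2 ⟨le_rfl, hk⟩)
  linarith [Rpab_eq_sum_add_Ulab (v := v) (b := b) hkM,
    Rpab_le_Lpab (M := M) (v := v) (b := b) (k := m) (by omega)]

lemma Ulab_le_Lpab (hb : IsBid M b) (hk : 1 ≤ k) (hkM : k ≤ M) :
    Ulab M v b k ≤ Lpab M v b := by
  linarith [Ulab_add_sub_le_Lpab (v := v) hb hk hkM, hb.anti le_rfl hk hkM]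

lemma Llab_le_Lpab (hM : 1 ≤ M) (hb : IsBid M b) : Llab M hM v b ≤ Lpab M v b :=
  sup'_le _ _ fun _ hk =>
    max_le (Olab_le_Lpab hb (mem_Icc.1 hk).2)
      (Ulab_le_Lpab hb (mem_Icc.1 hk).1 (mem_Icc.1 hk).2)

lemma Llab_nonneg (hM : 1 ≤ M) (v b : ℕ → ℝ) : 0 ≤ Llab M hM v b :=
  (sum_nonneg fun _ _ => pos_nonneg _).trans <|
    (le_max_right _ _).trans (le_sup' (fun k => max (Olab b k) (Ulab M v b k))
      (mem_Icc.2 ⟨le_rfl, hM⟩))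

lemma IsBid.le_Lpab (hb : IsBid M b) {j : ℕ} (hj : j ∈ Icc 1 M) : b j ≤ Lpab M v b :=
  (single_le_sum (fun _ hi => hb.nonneg hi) hj).trans sum_Icc_le_Lpab

lemma Lpab_nonneg (hb : IsBid M b) : 0 ≤ Lpab M v b :=
  (sum_nonneg fun _ hj => hb.nonneg hj).trans sum_Icc_le_Lpab

lemma Lpab_congr {b' : ℕ → ℝ} (h : Set.EqOn b b' (Set.Icc 1 M)) :
    Lpab M v b = Lpab M v b' := by
  refine sup'_congr _ rfl fun k hk => ?_
  have hkM := (mem_Icc.1 hk).2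
  have hbext : bext M b (k + 1) = bext M b' (k + 1) := by
    unfold bext
    split_ifs with h'
    · exact h ⟨by omega, h'⟩
    · rfl
  simp only [Rpab, hbext]
  congr 1
  exact sum_congr rfl fun j hj =>
    by rw [h ⟨(mem_Icc.1 hj).1, (mem_Icc.1 hj).2.trans hkM⟩]

lemma continuous_Lpab (M : ℕ) (v : ℕ → ℝ) :
    Continuous fun b : ℕ → ℝ => Lpab M v b := by
  have hbext : ∀ k, Continuous fun b : ℕ → ℝ => bext M b k := fun k => by
    unfold bext
    split_ifs <;> fun_prop
  unfold Lpab Rpab pos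
  fun_prop

end Regret

theorem exists_isMinimaxPAB (M : ℕ) (v : ℕ → ℝ) : ∃ b, IsMinimaxPAB M v b := by
  -- `Lpab` reads `b` only on `[1, M]`, so truncating to that range and capping at `L^PAB(0)`
  -- confines the search to a compact box of `ℕ → ℝ`.
  set C := Lpab M v 0
  set K := {b | IsBid M b} ∩ Set.Icc 0 ((Set.Icc 1 M).indicator fun _ => C)
  have hK : IsCompact K := isCompact_Icc.inter_left (isClosed_setOf_isBid M)
  have h0 : 0 ∈ K :=
    ⟨isBid_zero M, le_rfl, Set.indicator_nonneg (fun _ _ => Lpab_nonneg (isBid_zero M))⟩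
  obtain ⟨bs, ⟨hbs, -⟩, hmin⟩ :=
    hK.exists_isMinOn ⟨0, h0⟩ (continuous_Lpab M v).continuousOn
  refine ⟨bs, hbs, fun b hb => ?_⟩
  by_cases hbC : ∀ j ∈ Set.Icc 1 M, b j ≤ C
  · have hmem : (Set.Icc 1 M).indicator b ∈ K :=
      ⟨hb.indicator, Set.indicator_nonneg (fun _ hj => hb.nonneg (mem_Icc.2 hj)),
        fun j => Set.indicator_le_indicator' (hbC j)⟩
    calc Lpab M v bs ≤ Lpab M v ((Set.Icc 1 M).indicator b) := hmin hmem
      _ = Lpab M v b := Lpab_congr fun j hj => Set.indicator_of_mem hj b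
  · push Not at hbC
    obtain ⟨j, hj, hCj⟩ := hbC
    calc Lpab M v bs ≤ C := hmin h0
      _ ≤ b j := hCj.le
      _ ≤ Lpab M v b := hb.le_Lpab (mem_Icc.2 hj)

section Strict

variable {M : ℕ} {v b : ℕ → ℝ} {k : ℕ}

/-- When `b_M > 0` this follows from `R_M`; when `b_M = 0`, from `R_{M-1} = Σ_{j<M} b_j + v_M`. -/
lemma sum_Ico_lt_Lpab (hM : 1 ≤ M) (hb : IsBid M b) (hvM : 0 < v M) :
    ∑ j ∈ Ico 1 M, b j < Lpab M v b := by
  have hsplit : ∑ j ∈ Icc 1 M, b j = ∑ j ∈ Ico 1 M, b j + b M := by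
    rw [← Ico_insert_right hM, sum_insert right_notMem_Ico, add_comm]
  rcases hb.2.eq_or_lt with hbM | hbM
  · obtain ⟨m, rfl⟩ : ∃ m, M = m + 1 := ⟨M - 1, by omega⟩
    have hR := Rpab_eq_sum_add_Ulab (v := v) (b := b) (k := m) le_rfl
    rw [Ulab_self, ← hbM, sub_zero, pos_eq_self hvM.le] at hR
    simp only [sub_zero] at hR
    linarith [Rpab_le_Lpab (M := m + 1) (v := v) (b := b) (k := m) (by omega)]
  · linarith [sum_Icc_le_Lpab (M := M) (v := v) (b := b)]

lemma Lpab_pos (hM : 1 ≤ M) (hb : IsBid M b) (hvM : 0 < v M) : 0 < Lpab M v b :=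
  (sum_nonneg fun _ hj => hb.nonneg (Ico_subset_Icc_self hj)).trans_lt (sum_Ico_lt_Lpab hM hb hvM)

lemma Olab_lt_Lpab (hb : IsBid M b) (hvM : 0 < v M) (hkM : k < M) : Olab b k < Lpab M v b :=
  calc Olab b k ≤ ∑ j ∈ Icc 1 k, b j := mul_le_sum_Icc hb hkM.le
    _ ≤ ∑ j ∈ Ico 1 M, b j :=
      sum_le_sum_of_subset_of_nonneg (fun j hj => by simp only [mem_Icc, mem_Ico] at *; omega)
        fun _ hj _ => hb.nonneg (Ico_subset_Icc_self hj)
    _ < Lpab M v b := sum_Ico_lt_Lpab (by omega) hb hvM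

/-- If `Ulab M v b k` with `k ≥ 2` reached `L^PAB(b)`, then `R_{k-1}` would force `b_k = b_1`,
and then `R_0` would force `v_1 ≤ b_1`, making it vanish. -/
lemma Ulab_lt_Lpab (hv : IsVal M v) (hvM : 0 < v M) (hb : IsBid M b) (hk : 2 ≤ k)
    (hkM : k ≤ M) :
    Ulab M v b k < Lpab M v b := by
  by_contra! hLU
  have hbk : b k = b 1 := le_antisymm (hb.anti le_rfl (by omega) hkM)
    (by linarith [Ulab_add_sub_le_Lpab (v := v) hb (by omega) hkM])
  have hU1 : pos (v 1 - b 1) + Ulab M v b k ≤ Ulab M v b 1 := by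
    rw [Ulab, Ulab, hbk]
    calc pos (v 1 - b 1) + ∑ j ∈ Icc k M, pos (v j - b 1)
        = ∑ j ∈ insert 1 (Icc k M), pos (v j - b 1) :=
          (sum_insert (f := fun j => pos (v j - b 1)) (by rw [mem_Icc]; omega)).symm
      _ ≤ ∑ j ∈ Icc 1 M, pos (v j - b 1) :=
          sum_le_sum_of_subset_of_nonneg
            (fun j hj => by simp only [mem_insert, mem_Icc] at *; omega) fun _ _ _ => pos_nonneg _
  have hv1 : v 1 ≤ b 1 := by
    linarith [le_pos (v 1 - b 1), Ulab_le_Lpab (v := v) hb le_rfl (by omega : 1 ≤ M)]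
  have hUk : Ulab M v b k = 0 := sum_eq_zero fun j hj => pos_eq_zero <| by
    have := IsBid.anti hv le_rfl (by simp only [mem_Icc] at hj; omega) (mem_Icc.1 hj).2
    linarith
  linarith [Lpab_pos (by omega) hb hvM]

/-- Raise `b_1` and scale down `b_M` by a small `ε`: this relieves the only regrets that can be
tight, `Ulab M v b 1` and `Olab b M`, and leaves all others below `L^PAB(b)`. -/
theorem exists_Llab_lt_Lpab (hM : 1 < M) (hv : IsVal M v) (hvM : 0 < v M) (hb : IsBid M b) :
    ∃ b', IsBid M b' ∧ Llab M hM.le v b' < Lpab M v b := by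
  set L := Lpab M v b
  have hL : 0 < L := Lpab_pos hM.le hb hvM
  have hO1 : b 1 < L := by simpa [Olab] using Olab_lt_Lpab hb hvM hM
  have hUM : Ulab M v b M < L := Ulab_lt_Lpab hv hvM hb hM le_rfl
  obtain ⟨ε, hε, hε1, hεO, hεU⟩ :
      ∃ ε : ℝ, 0 < ε ∧ ε ≤ 1 ∧ b 1 + ε < L ∧ Ulab M v b M + ε * b M < L := by
    have hεO : ∀ᶠ ε in 𝓝 (0 : ℝ), b 1 + ε < L :=
      ((continuous_const.add continuous_id).tendsto' 0 (b 1) (add_zero _)).eventually_lt_const hO1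
    have hεU : ∀ᶠ ε in 𝓝 (0 : ℝ), Ulab M v b M + ε * b M < L :=
      ((continuous_const.add (continuous_id.mul continuous_const)).tendsto' 0 (Ulab M v b M)
        (by simp)).eventually_lt_const hUM
    have h := (eventually_le_nhds one_pos).and (hεO.and hεU)
    have hpos : ∀ᶠ ε in 𝓝[>] (0 : ℝ), 0 < ε := self_mem_nhdsWithin
    exact (hpos.and (h.filter_mono nhdsWithin_le_nhds)).exists
  set b' := Function.update (Function.update b 1 (b 1 + ε)) M ((1 - ε) * b M)
  have hb'1 : b' 1 = b 1 + ε := by simp [b', hM.ne]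
  have hb'M : b' M = (1 - ε) * b M := by simp [b']
  have hb' : ∀ k, k ≠ 1 → k ≠ M → b' k = b k := fun k hk1 hkM => by simp [b', hk1, hkM]
  refine ⟨b', ⟨fun k hk hkM => ?_, ?_⟩, (sup'_lt_iff _).2 fun k hk => ?_⟩
  · have hle : b' (k + 1) ≤ b (k + 1) := by
      rcases eq_or_ne (k + 1) M with h | h
      · rw [h, hb'M]
        nlinarith [hb.2]
      · rw [hb' _ (by omega) h]
    have hge : b k ≤ b' k := by
      rcases eq_or_ne k 1 with h | h
      · rw [h, hb'1]
        linarith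
      · rw [hb' _ h hkM.ne]
    linarith [hb.1 k hk hkM]
  · rw [hb'M]
    exact mul_nonneg (by linarith) hb.2
  · obtain ⟨hk1, hkM⟩ := mem_Icc.1 hk
    rcases eq_or_ne k 1 with rfl | hk1'
    · simp only [Olab, Ulab, hb'1, Nat.cast_one, one_mul]
      exact max_lt hεO
        (sum_pos_sub_lt _ _ (lt_add_of_pos_right _ hε) hL (Ulab_le_Lpab hb le_rfl hM.le))
    rcases eq_or_ne k M with rfl | hkM'
    · have hO : (k : ℝ) * b k ≤ L := Olab_le_Lpab hb le_rfl
      simp only [Olab, Ulab_self, hb'M]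
      refine max_lt ?_ ?_
      · nlinarith [mul_le_mul_of_nonneg_left hO (by linarith : (0 : ℝ) ≤ 1 - ε),
          mul_pos hε hL]
      · calc pos (v k - (1 - ε) * b k) = pos (v k - b k + ε * b k) := by ring_nf
          _ ≤ pos (v k - b k) + ε * b k := pos_add_le _ (mul_nonneg hε.le hb.2)
          _ < L := by rwa [Ulab_self] at hεU
    · simp only [Olab, Ulab, hb' k hk1' hkM']
      exact max_lt (Olab_lt_Lpab hb hvM (lt_of_le_of_ne hkM hkM'))
        (Ulab_lt_Lpab hv hvM hb (by omega) hkM)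

end Strict

/-- minimax loss in the multi-unit uniform-price auction is no greater than
minimax loss in the multi-unit pay-as-bid auction; strictly lower if `M ≥ 2` and `v_M > 0`. -/
theorem minimax_loss_lab_le_pab
    (M : ℕ) (hM : 1 ≤ M) (v : ℕ → ℝ) (hv : IsVal M v) :
    sInf {L : ℝ | ∃ b, IsBid M b ∧ L = Llab M hM v b} ≤
      sInf {L : ℝ | ∃ b, IsBid M b ∧ L = Lpab M v b} ∧
    (2 ≤ M → 0 < v M →
      sInf {L : ℝ | ∃ b, IsBid M b ∧ L = Llab M hM v b} <
        sInf {L : ℝ | ∃ b, IsBid M b ∧ L = Lpab M v b}) := by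
  have hLAB : BddBelow {L : ℝ | ∃ b, IsBid M b ∧ L = Llab M hM v b} :=
    ⟨0, by rintro _ ⟨b, -, rfl⟩; exact Llab_nonneg hM v b⟩
  obtain ⟨bs, hbs, hmin⟩ := exists_isMinimaxPAB M v
  have hPAB : sInf {L : ℝ | ∃ b, IsBid M b ∧ L = Lpab M v b} = Lpab M v bs :=
    IsLeast.csInf_eq ⟨⟨bs, hbs, rfl⟩, by rintro _ ⟨b, hb, rfl⟩; exact hmin b hb⟩
  rw [hPAB]
  refine ⟨(csInf_le hLAB ⟨bs, hbs, rfl⟩).trans (Llab_le_Lpab hM hbs), fun hM2 hvM => ?_⟩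
  obtain ⟨b', hb', hlt⟩ := exists_Llab_lt_Lpab hM2 hv hvM hbs
  exact (csInf_le hLAB ⟨b', hb', rfl⟩).trans_lt hlt

end
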